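/- Let κ be an uncountable regular cardinal. The poset ℚ of conditions q = {D^q(i,β) | i<κ, β ≤ β^q} as defined below (approximations to a transitive, normal, uniform κ-covering matrix for κ⁺, ordered by end-extension) is κ-closed: every decreasing sequence of conditions of length μ < κ has a lower bound. -/

import Mathlib

/-- The order type of a set of ordinals. -/
noncomputable def otp (X : Set Ordinal) : Ordinal.{1} :=
  Ordinal.type ((· < ·) : X → X → Prop)

/-- `δ` is an accumulation (limit) point of the set `C` of ordinals. -/
def IsAcc (C : Set Ordinal) (δ : Ordinal) : Prop :=
  0 < δ ∧ ∀ γ < δ, ∃ x ∈ C, γ < x ∧ x < δ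

/-- `C` is club in `α`. -/
def IsClubIn (C : Set Ordinal) (α : Ordinal) : Prop :=
  (∀ x ∈ C, x < α) ∧ (∀ γ < α, ∃ x ∈ C, γ ≤ x) ∧ (∀ δ < α, IsAcc C δ → δ ∈ C)

/-- A condition in the forcing `ℚ`: an approximation, up to the ordinal `top < κ⁺`,
to a transitive, normal, uniform `κ`-covering matrix for `κ⁺`. -/
structure QCond (κ : Cardinal) where
  top : Ordinal
  top_lt : top < (Order.succ κ).ord
  D : Ordinal → Ordinal → Set Ordinal
  union_eq : ∀ β ≤ top, (⋃ i ∈ Set.Iio κ.ord, D i β) = Set.Iio β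
  mono : ∀ β ≤ top, ∀ i j, i < j → j < κ.ord → D i β ⊆ D j β
  tra : ∀ i < κ.ord, ∀ α β, β ≤ top → α ∈ D i β → D i α ⊆ D i β
  otp_lt : ∀ i < κ.ord, ∀ β ≤ top, otp (D i β) < Ordinal.lift.{1,0} (κ.ord * κ.ord)
  uni : ∀ β ≤ top, ∃ i < κ.ord, ∀ j, i ≤ j → j < κ.ord → ∃ C ⊆ D j β, IsClubIn C β

/-- `p ≤ q` in `ℚ`: `p` end-extends `q`. -/
def QLe {κ : Cardinal} (p q : QCond κ) : Prop :=
  q.top ≤ p.top ∧ ∀ i < κ.ord, ∀ β ≤ q.top, p.D i β = q.D i β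

open Ordinal Set

instance (o : Ordinal) : IsWellOrder o.ToType (· < ·) := isWellOrder_lt

lemma otp_mono {X Y : Set Ordinal} (h : X ⊆ Y) : otp X ≤ otp Y := by
  rw [otp, otp, Ordinal.type_le_iff']
  exact ⟨(OrderEmbedding.ofStrictMono (Set.inclusion h)
    (fun a b hab => by simpa [Set.inclusion] using hab)).ltEmbedding⟩

lemma lift_le_otp_iff {δ : Ordinal.{0}} {X : Set Ordinal.{0}} :
    Ordinal.lift.{1} δ ≤ otp X ↔
      ∃ g : Ordinal → Ordinal, (∀ o < δ, g o ∈ X) ∧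
        (∀ a b, a < b → b < δ → g a < g b) := by
  have key : Ordinal.lift.{1} δ ≤ otp X ↔ Nonempty (InitialSeg ((· < ·) : δ.ToType → δ.ToType → Prop) ((· < ·) : X → X → Prop)) := by
    have h0 : Ordinal.lift.{1} δ = Ordinal.lift.{1} (Ordinal.type ((· < ·) : δ.ToType → δ.ToType → Prop)) := by
      rw [Ordinal.type_toType]
    rw [otp, h0, ← Ordinal.lift_id (Ordinal.type ((· < ·) : X → X → Prop))]
    exact Ordinal.lift_type_le.{0,1,1} (r := ((· < ·) : δ.ToType → δ.ToType → Prop)) (s := ((· < ·) : X → X → Prop))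
  rw [key]
  constructor
  · rintro ⟨F⟩
    refine ⟨fun o => if h : o < δ then (F ((Ordinal.ToType.mk (o := δ)) ⟨o, h⟩)).1 else 0,
      fun o ho => by simp only [ho, dif_pos]; exact (F ((Ordinal.ToType.mk (o := δ)) ⟨o, ho⟩)).2, ?_⟩
    intro a b hab hb
    have ha := hab.trans hb
    simp only [ha, hb, dif_pos]
    have h1 : (Ordinal.ToType.mk (o := δ)) ⟨a, ha⟩ < (Ordinal.ToType.mk (o := δ)) ⟨b, hb⟩ := by
      rw [OrderIso.lt_iff_lt]; exact Subtype.mk_lt_mk.mpr hab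
    exact F.toRelEmbedding.map_rel_iff.mpr h1
  · rintro ⟨g, hmem, hmono⟩
    refine ⟨RelEmbedding.collapse ?_⟩
    refine (OrderEmbedding.ofStrictMono
      (fun x => (⟨g ((Ordinal.ToType.mk (o := δ)).symm x).1,
        hmem _ ((Ordinal.ToType.mk (o := δ)).symm x).2⟩ : X)) ?_).ltEmbedding
    intro x y hxy
    have h1 : ((Ordinal.ToType.mk (o := δ)).symm x).1 < ((Ordinal.ToType.mk (o := δ)).symm y).1 := by
      have := (OrderIso.lt_iff_lt (Ordinal.ToType.mk (o := δ)).symm).mpr hxy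
      exact this
    exact Subtype.mk_lt_mk.mpr (hmono _ _ h1 ((Ordinal.ToType.mk (o := δ)).symm y).2)

lemma otp_lt_lift_ord {X : Set Ordinal.{0}} {c : Cardinal.{0}}
    (h : Cardinal.mk X < Cardinal.lift.{1} c) : otp X < Ordinal.lift.{1} c.ord := by
  rw [Cardinal.lift_ord, Cardinal.lt_ord, otp, Ordinal.card_type]
  exact h

lemma pigeon {κ : Cardinal.{0}} (hreg : κ.IsRegular) {ι : Type} (hι : Cardinal.mk ι < κ)
    (g : Ordinal → ι) :
    ∃ i, ∀ u < κ.ord, ∃ b, u < b ∧ b < κ.ord ∧ g b = i := by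
  by_contra hcon
  push_neg at hcon
  choose u hu hcontra using hcon
  set s := iSup u with hs
  have hsκ : s < κ.ord := Cardinal.iSup_lt_ord_of_isRegular hreg hι hu
  have hs1 : s + 1 < κ.ord := by
    have := (Cardinal.isSuccLimit_ord hreg.aleph0_le).succ_lt hsκ
    simpa [Order.succ_eq_add_one] using this
  exact hcontra (g (s + 1)) (s + 1)
    (lt_of_le_of_lt (Ordinal.le_iSup u _) (lt_add_one s)) hs1 rfl

lemma exists_enum {κ : Cardinal.{0}} (hreg : κ.IsRegular) {F : Set Ordinal.{0}}
    (hub : ∀ u < κ.ord, ∃ b ∈ F, u < b ∧ b < κ.ord) :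
    ∃ g : Ordinal → Ordinal, StrictMono g ∧ ∀ o < κ.ord, g o ∈ F ∧ g o < κ.ord := by
  set F' : Set Ordinal := (F ∩ Iio κ.ord) ∪ Ici κ.ord with hF'
  have hnb : ¬ BddAbove F' := by
    rintro ⟨a, ha⟩
    have h1 : max (a + 1) κ.ord ∈ F' := Or.inr (Set.mem_Ici.mpr (le_max_right _ _))
    have := ha h1
    exact absurd ((le_max_left (a+1) κ.ord).trans this) (by simp)
  refine ⟨Ordinal.enumOrd F', Ordinal.enumOrd_strictMono hnb, ?_⟩
  intro o
  induction o using Ordinal.induction with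
  | h o IH =>
    intro ho
    have hcard : o.card < κ := Cardinal.lt_ord.mp ho
    set s := Ordinal.bsup o (fun c _ => Ordinal.enumOrd F' c) with hs
    have hsκ : s < κ.ord := Cardinal.bsup_lt_ord_of_isRegular hreg hcard
      (fun c hc => (IH c hc (hc.trans ho)).2)
    obtain ⟨a, haF, hsa, haκ⟩ := hub s hsκ
    have haF' : a ∈ F' := Or.inl ⟨haF, haκ⟩
    have hle : Ordinal.enumOrd F' o ≤ a := by
      apply Ordinal.enumOrd_le_of_forall_lt haF'
      intro c hc
      exact lt_of_le_of_lt (Ordinal.le_bsup (fun c _ => Ordinal.enumOrd F' c) c hc) hsa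
    have hlt : Ordinal.enumOrd F' o < κ.ord := lt_of_le_of_lt hle haκ
    have hmem : Ordinal.enumOrd F' o ∈ F' := Ordinal.enumOrd_mem hnb o
    rcases hmem with h | h
    · exact ⟨h.1, hlt⟩
    · exact absurd h (by simpa using hlt)

lemma otp_iUnion_lt {κ : Cardinal.{0}} (hreg : κ.IsRegular) {ι : Type}
    (hι : Cardinal.mk ι < κ)
    (A : ι → Set Ordinal.{0}) (hA : ∀ i, otp (A i) < Ordinal.lift.{1} (κ.ord * κ.ord)) :
    otp (⋃ i, A i) < Ordinal.lift.{1} (κ.ord * κ.ord) := by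
  by_contra hcon
  push_neg at hcon
  obtain ⟨F, hFmem, hFmono⟩ := lift_le_otp_iff.mp hcon
  set K := κ.ord with hK
  have hKpos : (0 : Ordinal) < K := by
    rw [hK, Cardinal.lt_ord]
    simpa using hreg.pos
  have hK0 : K ≠ 0 := hKpos.ne'
  have hKK : (0 : Ordinal) < K * K := mul_pos hKpos hKpos
  have hne : Nonempty ι := by
    obtain ⟨i, -⟩ := mem_iUnion.mp (hFmem 0 hKK)
    exact ⟨i⟩
  have hch : ∀ o, ∃ i, o < K * K → F o ∈ A i := by
    intro o
    by_cases h : o < K * K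
    · obtain ⟨i, hi⟩ := mem_iUnion.mp (hFmem o h)
      exact ⟨i, fun _ => hi⟩
    · exact ⟨Classical.arbitrary ι, fun hh => absurd hh h⟩
  choose idx hidx using hch
  have hmul : ∀ {b c : Ordinal}, b < K → c < K → K * b + c < K * K := by
    intro b c hb hc
    calc K * b + c < K * b + K := add_lt_add_right hc _
      _ = K * (b + 1) := (mul_add_one K b).symm
      _ ≤ K * K := by
          apply mul_le_mul_right
          rw [Ordinal.add_one_eq_succ]
          exact Order.succ_le_of_lt hb
  have h1 : ∀ b : Ordinal, ∃ i, ∀ u < K, ∃ c, u < c ∧ c < K ∧ idx (K * b + c) = i :=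
    fun b => pigeon hreg hι (fun c => idx (K * b + c))
  choose I1 hI1 using h1
  obtain ⟨istar, histar⟩ := pigeon hreg hι I1
  obtain ⟨eB, heBmono, heBmem⟩ := exists_enum hreg (F := {b | I1 b = istar})
    (fun u hu => by
      obtain ⟨b, h1, h2, h3⟩ := histar u hu
      exact ⟨b, h3, h1, h2⟩)
  have h2 : ∀ b : Ordinal, ∃ e : Ordinal → Ordinal, StrictMono e ∧
      ∀ o < K, e o ∈ {c | idx (K * b + c) = I1 b} ∧ e o < K :=
    fun b => exists_enum hreg (fun u hu => by
      obtain ⟨c, hc1, hc2, hc3⟩ := hI1 b u hu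
      exact ⟨c, hc3, hc1, hc2⟩)
  choose eC heCmono heCspec using h2
  set G : Ordinal → Ordinal := fun o => F (K * (eB (o / K)) + eC (eB (o / K)) (o % K)) with hG
  have harg : ∀ o < K * K, (K * (eB (o / K)) + eC (eB (o / K)) (o % K)) < K * K ∧
      idx (K * (eB (o / K)) + eC (eB (o / K)) (o % K)) = istar := by
    intro o ho
    have hb : o / K < K := (Ordinal.div_lt hK0).mpr ho
    have hc : o % K < K := Ordinal.mod_lt o hK0
    have hbB := heBmem (o / K) hb
    have hcC := heCspec (eB (o / K)) (o % K) hc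
    refine ⟨hmul hbB.2 hcC.2, ?_⟩
    have h3 := hcC.1
    have h4 := hbB.1
    simp only [Set.mem_setOf_eq] at h3 h4
    rw [h3]
    exact h4
  have hGmem : ∀ o < K * K, G o ∈ A istar := by
    intro o ho
    obtain ⟨hlt, heq⟩ := harg o ho
    have := hidx _ hlt
    rwa [heq] at this
  have hGmono : ∀ a b, a < b → b < K * K → G a < G b := by
    intro a b hab hb
    have ha := hab.trans hb
    apply hFmono _ _ ?_ (harg b hb).1
    have hdivle : a / K ≤ b / K := by
      rw [Ordinal.le_div hK0]
      calc K * (a / K) ≤ K * (a / K) + a % K := le_self_add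
        _ = a := Ordinal.div_add_mod a K
        _ ≤ b := hab.le
    have hbmodlt : b % K < K := Ordinal.mod_lt b hK0
    have hamodlt : a % K < K := Ordinal.mod_lt a hK0
    rcases lt_or_eq_of_le hdivle with h | h
    · calc K * (eB (a / K)) + eC (eB (a / K)) (a % K)
          < K * (eB (a / K)) + K :=
            add_lt_add_right (heCspec (eB (a / K)) (a % K) hamodlt).2 _
        _ = K * (eB (a / K) + 1) := (mul_add_one K _).symm
        _ ≤ K * (eB (b / K)) := by
            apply mul_le_mul_right
            rw [Ordinal.add_one_eq_succ]
            exact Order.succ_le_of_lt (heBmono h)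
        _ ≤ K * (eB (b / K)) + eC (eB (b / K)) (b % K) := le_self_add
    · have hmod : a % K < b % K := by
        have ha1 := Ordinal.div_add_mod a K
        have hb1 := Ordinal.div_add_mod b K
        rw [← ha1, ← hb1, ← h] at hab
        exact (add_lt_add_iff_left _).mp hab
      rw [h]
      exact add_lt_add_right (heCmono (eB (b / K)) hmod) _
  have hfin := lift_le_otp_iff.mpr ⟨G, hGmem, hGmono⟩
  exact absurd hfin (hA istar).not_ge

/-- `ℚ` is `κ`-closed: every decreasing sequence of conditions of length `μ < κ`
has a lower bound. -/
theorem stmt_5 (κ : Cardinal) (hreg : κ.IsRegular) (huc : Cardinal.aleph0 < κ)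
    (μ : Ordinal) (hμ : μ < κ.ord) (f : Ordinal → QCond κ)
    (hdec : ∀ α β, α < β → β < μ → QLe (f β) (f α)) :
    ∃ q : QCond κ, ∀ α < μ, QLe q (f α) := by
  classical
  rcases eq_or_ne μ 0 with hμ0 | hμ0
  · exact ⟨f 0, fun α hα => absurd hα (by simp [hμ0])⟩
  by_cases H : ∃ η, η < μ ∧ ∀ ξ < μ, (f ξ).top ≤ (f η).top
  · obtain ⟨η₀, hη₀, hmax⟩ := H
    refine ⟨f η₀, fun α hα => ?_⟩
    rcases lt_trichotomy α η₀ with h | h | h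
    · exact hdec α η₀ h hη₀
    · subst h; exact ⟨le_rfl, fun _ _ _ _ => rfl⟩
    · have h1 := hdec η₀ α h hα
      exact ⟨hmax α hα, fun i hi β hβ => (h1.2 i hi β (hβ.trans (hmax α hα))).symm⟩
  push_neg at H
  have hκpos : (0 : Ordinal) < κ.ord := by
    rw [Cardinal.lt_ord]; simpa using hreg.pos
  set β' : Ordinal := Ordinal.bsup μ (fun η _ => (f η).top) with hβ'
  have htoplt : ∀ η < μ, (f η).top < β' := by
    intro η hη
    obtain ⟨ξ, hξ, hlt⟩ := H η hη
    exact hlt.trans_le (Ordinal.le_bsup _ ξ hξ)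
  have hcofβ : ∀ γ < β', ∃ η, η < μ ∧ γ < (f η).top := by
    intro γ hγ
    obtain ⟨η, hη, h⟩ := (Ordinal.lt_bsup _).mp hγ
    exact ⟨η, hη, h⟩
  have htopmono : ∀ ξ η, ξ ≤ η → η < μ → (f ξ).top ≤ (f η).top := by
    intro ξ η h hη
    rcases eq_or_lt_of_le h with rfl | h'
    · exact le_rfl
    · exact (hdec ξ η h' hη).1
  have hagree : ∀ η ξ i β, η < μ → ξ < μ → i < κ.ord → β ≤ (f η).top → β ≤ (f ξ).top →
      (f η).D i β = (f ξ).D i β := by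
    intro η ξ i β hη hξ hi hβη hβξ
    rcases lt_trichotomy η ξ with h | rfl | h
    · exact ((hdec η ξ h hξ).2 i hi β hβη).symm
    · rfl
    · exact (hdec ξ η h hη).2 i hi β hβξ
  set T : Set Ordinal := (fun η => (f η).top) '' (Set.Iio μ) with hT
  set NEW : Ordinal → Set Ordinal := fun i =>
    T ∪ ⋃ η ∈ Set.Iio μ, (f η).D i ((f η).top) with hNEW
  set Dq : Ordinal → Ordinal → Set Ordinal := fun i β =>
    if h : ∃ η, η < μ ∧ β ≤ (f η).top then (f h.choose).D i β else NEW i with hDq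
  have hDq_eq : ∀ i β η, i < κ.ord → η < μ → β ≤ (f η).top → Dq i β = (f η).D i β := by
    intro i β η hi hη hβ
    have hex : ∃ η, η < μ ∧ β ≤ (f η).top := ⟨η, hη, hβ⟩
    simp only [hDq]
    rw [dif_pos hex]
    exact hagree hex.choose η i β hex.choose_spec.1 hη hi hex.choose_spec.2 hβ
  have hDq_new : ∀ i, Dq i β' = NEW i := by
    intro i
    have hno : ¬ ∃ η, η < μ ∧ β' ≤ (f η).top := by
      rintro ⟨η, hη, hle⟩
      exact absurd hle (htoplt η hη).not_ge
    simp only [hDq]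
    rw [dif_neg hno]
  have hsplit : ∀ β, β ≤ β' → β = β' ∨ ∃ η, η < μ ∧ β ≤ (f η).top := by
    intro β hβ
    rcases eq_or_lt_of_le hβ with h | h
    · exact Or.inl h
    · obtain ⟨η, hη, h'⟩ := hcofβ β h
      exact Or.inr ⟨η, hη, h'.le⟩
  have hDsub : ∀ η i, η < μ → i < κ.ord → (f η).D i ((f η).top) ⊆ Set.Iio ((f η).top) := by
    intro η i hη hi x hx
    rw [← (f η).union_eq _ le_rfl]
    exact Set.mem_biUnion hi hx
  -- fields
  have top_lt' : β' < (Order.succ κ).ord := by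
    apply Cardinal.bsup_lt_ord_of_isRegular (Cardinal.isRegular_succ hreg.aleph0_le)
    · exact Cardinal.lt_ord.mp (hμ.trans_le (Cardinal.ord_le_ord.mpr (Order.le_succ κ)))
    · exact fun η hη => (f η).top_lt
  have union_eq' : ∀ β ≤ β', (⋃ i ∈ Set.Iio κ.ord, Dq i β) = Set.Iio β := by
    intro β hβ
    rcases hsplit β hβ with rfl | ⟨η, hη, hβle⟩
    · rw [Set.iUnion₂_congr (fun i (hi : i ∈ Set.Iio κ.ord) => hDq_new i)]
      ext x
      constructor
      · intro hx
        obtain ⟨i, hi, hxi⟩ := Set.mem_iUnion₂.mp hx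
        rcases hxi with hxT | hxD
        · obtain ⟨ζ, hζ, rfl⟩ := hxT
          exact htoplt ζ hζ
        · obtain ⟨ζ, hζ, hxζ⟩ := Set.mem_iUnion₂.mp hxD
          exact (hDsub ζ i hζ hi hxζ).trans (htoplt ζ hζ)
      · intro hx
        obtain ⟨ζ, hζ, hxζ⟩ := hcofβ x hx
        have : x ∈ ⋃ i ∈ Set.Iio κ.ord, (f ζ).D i ((f ζ).top) := by
          rw [(f ζ).union_eq _ le_rfl]; exact hxζ
        obtain ⟨i, hi, hmem⟩ := Set.mem_iUnion₂.mp this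
        exact Set.mem_biUnion hi (Or.inr (Set.mem_biUnion (show ζ ∈ Set.Iio μ from hζ) hmem))
    · rw [Set.iUnion₂_congr (fun i (hi : i ∈ Set.Iio κ.ord) => hDq_eq i β η hi hη hβle)]
      exact (f η).union_eq β hβle
  have mono' : ∀ β ≤ β', ∀ i j, i < j → j < κ.ord → Dq i β ⊆ Dq j β := by
    intro β hβ i j hij hj
    have hi := hij.trans hj
    rcases hsplit β hβ with rfl | ⟨η, hη, hβle⟩
    · rw [hDq_new i, hDq_new j]
      rintro x (hx | hx)
      · exact Or.inl hx
      · obtain ⟨ζ, hζ, hxζ⟩ := Set.mem_iUnion₂.mp hx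
        exact Or.inr (Set.mem_biUnion hζ ((f ζ).mono _ le_rfl i j hij hj hxζ))
    · rw [hDq_eq i β η hi hη hβle, hDq_eq j β η hj hη hβle]
      exact (f η).mono β hβle i j hij hj
  have tra' : ∀ i < κ.ord, ∀ α β, β ≤ β' → α ∈ Dq i β → Dq i α ⊆ Dq i β := by
    intro i hi α β hβ hmem
    rcases hsplit β hβ with rfl | ⟨η, hη, hβle⟩
    · rw [hDq_new i] at hmem ⊢
      rcases hmem with hxT | hxD
      · obtain ⟨η, hη, rfl⟩ := hxT
        rw [hDq_eq i _ η hi hη le_rfl]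
        exact fun x hx => Or.inr (Set.mem_biUnion hη hx)
      · obtain ⟨η, hη, hx⟩ := Set.mem_iUnion₂.mp hxD
        have hα_lt : α < (f η).top := hDsub η i hη hi hx
        rw [hDq_eq i α η hi hη hα_lt.le]
        intro x hx'
        exact Or.inr (Set.mem_biUnion hη ((f η).tra i hi α _ le_rfl hx hx'))
    · rw [hDq_eq i β η hi hη hβle] at hmem
      have hαβ : α < β := by
        have : (f η).D i β ⊆ Set.Iio β := by
          intro x hx
          rw [← (f η).union_eq β hβle]
          exact Set.mem_biUnion hi hx
        exact this hmem
      rw [hDq_eq i α η hi hη (hαβ.le.trans hβle), hDq_eq i β η hi hη hβle]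
      exact (f η).tra i hi α β hβle hmem
  have otp_lt' : ∀ i < κ.ord, ∀ β ≤ β', otp (Dq i β) < Ordinal.lift.{1,0} (κ.ord * κ.ord) := by
    intro i hi β hβ
    rcases hsplit β hβ with rfl | ⟨η, hη, hβle⟩
    · rw [hDq_new i]
      set toOrd : μ.ToType → Ordinal := fun t => ((Ordinal.ToType.mk (o := μ)).symm t).1 with htoOrddef
      have htoOrd : ∀ t, toOrd t < μ := fun t => ((Ordinal.ToType.mk (o := μ)).symm t).2
      set A : (Unit ⊕ μ.ToType) → Set Ordinal := fun j =>
        Sum.rec (fun _ => T) (fun t => (f (toOrd t)).D i ((f (toOrd t)).top)) j with hA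
      have hsub : NEW i ⊆ ⋃ j, A j := by
        rintro x (hx | hx)
        · exact Set.mem_iUnion.mpr ⟨Sum.inl (), hx⟩
        · obtain ⟨η, hη, hxη⟩ := Set.mem_iUnion₂.mp hx
          refine Set.mem_iUnion.mpr ⟨Sum.inr ((Ordinal.ToType.mk (o := μ)) ⟨η, hη⟩), ?_⟩
          have heq : toOrd ((Ordinal.ToType.mk (o := μ)) ⟨η, hη⟩) = η := by
            simp [htoOrddef]
          show x ∈ (f (toOrd ((Ordinal.ToType.mk (o := μ)) ⟨η, hη⟩))).D i
            ((f (toOrd ((Ordinal.ToType.mk (o := μ)) ⟨η, hη⟩))).top)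
          rw [heq]
          exact hxη
      apply lt_of_le_of_lt (otp_mono hsub)
      apply otp_iUnion_lt hreg
      · have hmk : Cardinal.mk μ.ToType = μ.card := Cardinal.mk_toType μ
        have : Cardinal.mk (Unit ⊕ μ.ToType) = 1 + μ.card := by
          simp [Cardinal.mk_sum, hmk]
        rw [this]
        exact Cardinal.add_lt_of_lt hreg.aleph0_le
          (lt_of_lt_of_le Cardinal.one_lt_aleph0 hreg.aleph0_le) (Cardinal.lt_ord.mp hμ)
      · rintro (⟨⟩ | t)
        · have h1 : otp T < Ordinal.lift.{1} κ.ord := by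
            apply otp_lt_lift_ord
            calc Cardinal.mk T ≤ Cardinal.mk (Set.Iio μ : Set Ordinal) := Cardinal.mk_image_le
              _ = Cardinal.lift.{1} μ.card := Cardinal.mk_Iio_ordinal μ
              _ < Cardinal.lift.{1} κ := by
                  rw [Cardinal.lift_lt]; exact Cardinal.lt_ord.mp hμ
          apply lt_of_lt_of_le h1
          rw [Ordinal.lift_le]
          calc κ.ord = κ.ord * 1 := (mul_one _).symm
            _ ≤ κ.ord * κ.ord := by
                apply mul_le_mul_right
                exact Order.one_le_iff_pos.mpr hκpos
        · exact (f (toOrd t)).otp_lt i hi _ le_rfl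
    · rw [hDq_eq i β η hi hη hβle]
      exact (f η).otp_lt i hi β hβle
  have uni' : ∀ β ≤ β', ∃ i < κ.ord, ∀ j, i ≤ j → j < κ.ord →
      ∃ C ⊆ Dq j β, IsClubIn C β := by
    intro β hβ
    rcases hsplit β hβ with rfl | ⟨η, hη, hβle⟩
    · -- the hard case: club in β'
      have hP : ∀ x, x < β' → ∃ i, i < κ.ord ∧ ∃ η, η < μ ∧ x ∈ (f η).D i ((f η).top) := by
        intro x hx
        obtain ⟨η, hη, hxt⟩ := hcofβ x hx
        have : x ∈ ⋃ i ∈ Set.Iio κ.ord, (f η).D i ((f η).top) := by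
          rw [(f η).union_eq _ le_rfl]; exact hxt
        obtain ⟨i, hi, hmem⟩ := Set.mem_iUnion₂.mp this
        exact ⟨i, hi, η, hη, hmem⟩
      set toOrd : μ.ToType → Ordinal := fun t => ((Ordinal.ToType.mk (o := μ)).symm t).1 with htoOrddef
      set y : Ordinal → Ordinal := fun η => Ordinal.bsup η (fun ξ _ => (f ξ).top) with hy
      set v : μ.ToType → Ordinal := fun t =>
        if h : y (toOrd t) < β' then (hP _ h).choose else 0 with hv
      have hvlt : ∀ t, v t < κ.ord := by
        intro t
        rw [hv]
        dsimp only
        split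
        · exact (hP _ ‹_›).choose_spec.1
        · exact hκpos
      set i₀ : Ordinal := iSup v with hi₀
      have hi₀κ : i₀ < κ.ord := by
        apply Cardinal.iSup_lt_ord_of_isRegular hreg _ hvlt
        rw [Cardinal.mk_toType]
        exact Cardinal.lt_ord.mp hμ
      refine ⟨i₀, hi₀κ, fun j hij hj => ?_⟩
      set C : Set Ordinal := T ∪ {x | x < β' ∧ IsAcc T x} with hC
      refine ⟨C, ?_, ?_, ?_, ?_⟩
      · -- C ⊆ Dq j β'
        rw [hDq_new j]
        rintro x (hx | ⟨hxβ, hxacc⟩)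
        · exact Or.inl hx
        · have hSx : {η | η < μ ∧ x ≤ (f η).top}.Nonempty := by
            obtain ⟨η, hη, h⟩ := hcofβ x hxβ
            exact ⟨η, hη, h.le⟩
          set η₁ := sInf {η | η < μ ∧ x ≤ (f η).top} with hη₁def
          have hη₁ : η₁ ∈ {η | η < μ ∧ x ≤ (f η).top} := csInf_mem hSx
          have hxy : x = y η₁ := by
            apply le_antisymm
            · by_contra hcon2
              push_neg at hcon2
              obtain ⟨tt, htT, h1, h2⟩ := hxacc.2 (y η₁) hcon2
              obtain ⟨ξ, hξ, rfl⟩ := htT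
              rcases lt_or_ge ξ η₁ with hcc | hcc
              · exact absurd (Ordinal.le_bsup (fun ξ _ => (f ξ).top) ξ hcc) h1.not_ge
              · have : x ≤ (f ξ).top := hη₁.2.trans (htopmono η₁ ξ hcc hξ)
                exact absurd this h2.not_ge
            · apply Ordinal.bsup_le
              intro ξ hξ
              have hξμ : ξ < μ := hξ.trans hη₁.1
              have hnm : ξ ∉ {η | η < μ ∧ x ≤ (f η).top} :=
                notMem_of_lt_csInf hξ (OrderBot.bddBelow _)
              have hxξ : ¬ x ≤ (f ξ).top := fun hc => hnm ⟨hξμ, hc⟩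
              exact (not_le.mp hxξ).le
          have hyβ : y η₁ < β' := hxy ▸ hxβ
          set t₁ := (Ordinal.ToType.mk (o := μ)) ⟨η₁, hη₁.1⟩ with ht₁def
          have ht₁ : toOrd t₁ = η₁ := by simp [htoOrddef, ht₁def]
          have hvt : v t₁ = (hP (y η₁) hyβ).choose := by
            rw [hv]
            dsimp only
            rw [ht₁, dif_pos hyβ]
          obtain ⟨hvκ, η₂, hη₂, hmem⟩ := (hP (y η₁) hyβ).choose_spec
          rw [← hvt] at hmem
          have hjv : v t₁ ≤ j := le_trans (Ordinal.le_iSup v t₁) hij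
          have hmem' : x ∈ (f η₂).D j ((f η₂).top) := by
            rw [hxy]
            rcases eq_or_lt_of_le hjv with heq | hlt
            · rw [← heq]; exact hmem
            · exact (f η₂).mono _ le_rfl (v t₁) j hlt hj hmem
          exact Or.inr (Set.mem_biUnion (show η₂ ∈ Set.Iio μ from hη₂) hmem')
      · -- bounded
        rintro x (hx | hx)
        · obtain ⟨η, hη, rfl⟩ := hx
          exact htoplt η hη
        · exact hx.1
      · -- cofinal
        intro γ hγ
        obtain ⟨η, hη, h⟩ := hcofβ γ hγ
        exact ⟨(f η).top, Or.inl ⟨η, hη, rfl⟩, h.le⟩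
      · -- closed
        intro δ hδ hacc
        right
        refine ⟨hδ, hacc.1, fun γ hγ => ?_⟩
        obtain ⟨x, hxC, h1, h2⟩ := hacc.2 γ hγ
        rcases hxC with hxT | ⟨hxβ, hxacc⟩
        · exact ⟨x, hxT, h1, h2⟩
        · obtain ⟨tt, htT, h3, h4⟩ := hxacc.2 γ h1
          exact ⟨tt, htT, h3, h4.trans h2⟩
    · obtain ⟨i, hi, h⟩ := (f η).uni β hβle
      refine ⟨i, hi, fun j hij hj => ?_⟩
      obtain ⟨C, hCsub, hclub⟩ := h j hij hj
      refine ⟨C, ?_, hclub⟩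
      rw [hDq_eq j β η hj hη hβle]
      exact hCsub
  refine ⟨⟨β', top_lt', Dq, union_eq', mono', tra', otp_lt', uni'⟩, ?_⟩
  intro α hα
  exact ⟨Ordinal.le_bsup _ α hα, fun i hi β hβ => hDq_eq i β α hi hα hβ⟩
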